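/- Let ψ : ℝ → ℝ be infinitely differentiable and satisfy the ordinary differential equation ψ'''(s) + 12·ψ'(s)·ψ(s) − s·ψ'(s) − 2·ψ(s) = 0 for all s ∈ ℝ. Define φ(x,t,r) = (t/4)^(-2/3)·ψ( (t/4)^(-1/3)·r ) for (x,t,r) ∈ ℝ × (0,∞) × ℝ (so φ is independent of x). Then φ satisfies the (r-differentiated) KP equation: ∂_r( ∂_t φ + φ·∂_r φ + (1/12)·∂_r^3 φ ) + (1/4)·∂_x^2 φ = 0 at every point of ℝ × (0,∞) × ℝ. -/

import Mathlib

/-!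
The exponents of the ansatz are those of the KP scaling symmetry: with `u = t/4` and
`s = u^{-1/3} r`, each of `∂_t φ`, `φ ∂_r φ` and `∂_r³ φ` is `u^{-5/3}` times a function of `s`.
Hence the KP flux `∂_t φ + φ ∂_r φ + (1/12) ∂_r³ φ` equals `(1/12) u^{-5/3}` times the left-hand
side of the ODE at `s`, so it vanishes identically in `r`; and `φ` does not depend on `x`.
-/

/-- The left-hand side of the (r-differentiated) KP equation
`∂_r(∂_t φ + φ·∂_r φ + (1/12)·∂_r³ φ) + (1/4)·∂_x² φ` for `φ = φ x t r`. -/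
noncomputable def kpDiff (φ : ℝ → ℝ → ℝ → ℝ) (x t r : ℝ) : ℝ :=
  deriv (fun r' => deriv (fun t' => φ x t' r') t
      + φ x t r' * deriv (fun s => φ x t s) r'
      + (1/12) * iteratedDeriv 3 (fun s => φ x t s) r') r
    + (1/4) * iteratedDeriv 2 (fun x' => φ x' t r) x

open Real

noncomputable def kpFlux (φ : ℝ → ℝ → ℝ → ℝ) (x t r : ℝ) : ℝ :=
  deriv (fun t' => φ x t' r) t + φ x t r * deriv (fun s => φ x t s) r
    + (1/12) * iteratedDeriv 3 (fun s => φ x t s) r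

theorem kpDiff_eq_deriv_kpFlux_add (φ : ℝ → ℝ → ℝ → ℝ) (x t r : ℝ) :
    kpDiff φ x t r = deriv (kpFlux φ x t) r + (1/4) * iteratedDeriv 2 (fun x' => φ x' t r) x :=
  rfl

noncomputable def similarityODE (ψ : ℝ → ℝ) (s : ℝ) : ℝ :=
  iteratedDeriv 3 ψ s + 12 * deriv ψ s * ψ s - s * deriv ψ s - 2 * ψ s

noncomputable abbrev selfSimilar (ψ : ℝ → ℝ) : ℝ → ℝ → ℝ → ℝ :=
  fun _ t r => (t/4) ^ (-(2:ℝ)/3) * ψ ((t/4) ^ (-(1:ℝ)/3) * r)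

theorem iteratedDeriv_const_mul_comp_const_mul {𝕜 : Type*} [NontriviallyNormedField 𝕜]
    {ψ : 𝕜 → 𝕜} {n : ℕ} (hψ : ContDiff 𝕜 n ψ) (a b r : 𝕜) :
    iteratedDeriv n (fun s => a * ψ (b * s)) r = a * b ^ n * iteratedDeriv n ψ (b * r) := by
  rw [iteratedDeriv_const_mul_field, iteratedDeriv_comp_const_mul hψ, mul_assoc]

theorem hasDerivAt_rpow_mul_comp_rpow_mul {ψ : ℝ → ℝ} {u : ℝ} (r : ℝ)
    (hψ : DifferentiableAt ℝ ψ (u ^ (-(1:ℝ)/3) * r)) (hu : 0 < u) :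
    HasDerivAt (fun v => v ^ (-(2:ℝ)/3) * ψ (v ^ (-(1:ℝ)/3) * r))
      (-(1/3) * u ^ (-(5:ℝ)/3) * (2 * ψ (u ^ (-(1:ℝ)/3) * r)
        + u ^ (-(1:ℝ)/3) * r * deriv ψ (u ^ (-(1:ℝ)/3) * r))) u := by
  have hscale := (hasDerivAt_rpow_const (p := -(1:ℝ)/3) (Or.inl hu.ne')).mul_const r
  have hprod : HasDerivAt (fun v => v ^ (-(2:ℝ)/3) * ψ (v ^ (-(1:ℝ)/3) * r)) _ u :=
    (hasDerivAt_rpow_const (p := -(2:ℝ)/3) (Or.inl hu.ne')).mul (hψ.hasDerivAt.comp u hscale)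
  refine hprod.congr_deriv ?_
  have e1 : u ^ (-(2:ℝ)/3 - 1) = u ^ (-(5:ℝ)/3) := by norm_num
  have e2 : u ^ (-(2:ℝ)/3) * u ^ (-(1:ℝ)/3 - 1) = u ^ (-(5:ℝ)/3) * u ^ (-(1:ℝ)/3) := by
    rw [← rpow_add hu, ← rpow_add hu]; norm_num
  linear_combination (-(2:ℝ)/3 * ψ (u ^ (-(1:ℝ)/3) * r)) * e1
    + (-(1:ℝ)/3 * r * deriv ψ (u ^ (-(1:ℝ)/3) * r)) * e2

theorem hasDerivAt_selfSimilar_time {ψ : ℝ → ℝ} (hψ : Differentiable ℝ ψ) {t : ℝ} (ht : 0 < t)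
    (x r : ℝ) :
    HasDerivAt (fun t' => selfSimilar ψ x t' r)
      (-(1/12) * (t/4) ^ (-(5:ℝ)/3) * (2 * ψ ((t/4) ^ (-(1:ℝ)/3) * r)
        + (t/4) ^ (-(1:ℝ)/3) * r * deriv ψ ((t/4) ^ (-(1:ℝ)/3) * r))) t := by
  have h := (hasDerivAt_rpow_mul_comp_rpow_mul r (hψ _) (by positivity : 0 < t / 4)).comp t
    ((hasDerivAt_id' t).div_const 4)
  exact h.congr_deriv (by ring)

theorem kpFlux_selfSimilar {ψ : ℝ → ℝ} (hψ : ContDiff ℝ 3 ψ) {t : ℝ} (ht : 0 < t) (x r : ℝ) :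
    kpFlux (selfSimilar ψ) x t r
      = (1/12) * (t/4) ^ (-(5:ℝ)/3) * similarityODE ψ ((t/4) ^ (-(1:ℝ)/3) * r) := by
  have hψ₁ : ContDiff ℝ 1 ψ := hψ.of_le (by norm_num)
  have hr := iteratedDeriv_const_mul_comp_const_mul hψ₁ ((t/4) ^ (-(2:ℝ)/3)) ((t/4) ^ (-(1:ℝ)/3)) r
  rw [iteratedDeriv_one, iteratedDeriv_one] at hr
  rw [kpFlux, (hasDerivAt_selfSimilar_time (hψ₁.differentiable one_ne_zero) ht x r).deriv, hr,
    iteratedDeriv_const_mul_comp_const_mul hψ]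
  have hu : 0 < t / 4 := by positivity
  have h2 : (t/4) ^ (-(2:ℝ)/3) * (t/4) ^ (-(2:ℝ)/3) * (t/4) ^ (-(1:ℝ)/3) = (t/4) ^ (-(5:ℝ)/3) := by
    rw [← rpow_add hu, ← rpow_add hu]; norm_num
  have h3 : (t/4) ^ (-(2:ℝ)/3) * ((t/4) ^ (-(1:ℝ)/3)) ^ 3 = (t/4) ^ (-(5:ℝ)/3) := by
    rw [← rpow_natCast, ← rpow_mul hu.le, ← rpow_add hu]; norm_num
  set s := (t/4) ^ (-(1:ℝ)/3) * r
  rw [similarityODE]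
  linear_combination (ψ s * deriv ψ s) * h2 + (1/12 * iteratedDeriv 3 ψ s) * h3

/-- the self-similar ansatz `φ(x,t,r) = (t/4)^{-2/3} ψ((t/4)^{-1/3} r)`
built from a solution `ψ` of `ψ''' + 12 ψ' ψ - s ψ' - 2 ψ = 0` satisfies the
(r-differentiated) KP equation on ℝ × (0,∞) × ℝ. -/
theorem selfSimilar_GOE_solves_KP (ψ : ℝ → ℝ)
    (hψ : ContDiff ℝ (⊤ : ℕ∞) ψ)
    (hode : ∀ s : ℝ, iteratedDeriv 3 ψ s + 12 * deriv ψ s * ψ s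
      - s * deriv ψ s - 2 * ψ s = 0) :
    ∀ x t r : ℝ, 0 < t →
      kpDiff (fun _ t r =>
        (t/4) ^ (-(2:ℝ)/3) * ψ ((t/4) ^ (-(1:ℝ)/3) * r)) x t r = 0 := by
  intro x t r ht
  have hflux : kpFlux (selfSimilar ψ) x t = fun _ => 0 := by
    funext r'
    rw [kpFlux_selfSimilar (hψ.of_le (by norm_cast)) ht, similarityODE, hode, mul_zero]
  rw [kpDiff_eq_deriv_kpFlux_add, hflux, deriv_const, iteratedDeriv_const]
  norm_num
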